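/- (Remark 1.4) For every a ∈ [−1,1) with a ≠ 0, every α ∈ (0,π) and every γ ∈ [0,π/2], the constant A[α,γ,a] is strictly positive. Consequently, with Θ₀^low := 0.590106125 − 10⁻⁹, the quadratic function x ↦ A[α,γ,a]·x² − (π/2)·|a|·Θ₀^low·x + π/2 attains its minimum over (0,∞) at the unique point x̄ = π·|a|·Θ₀^low/(4·A[α,γ,a]) > 0. -/

import Mathlib

open MeasureTheory Real Set Filter

noncomputable section

namespace MagStep

/-- `j`-th coordinate basis vector of `ℝ³`. -/
def e3 (j : Fin 3) : Fin 3 → ℝ := Pi.single j 1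

/-- `j`-th coordinate basis vector of `ℝ²`. -/
def e2 (j : Fin 2) : Fin 2 → ℝ := Pi.single j 1

/-- The open half-space `{x₂ > 0}` of `ℝ³` (coordinates indexed `0,1,2` for `x₁,x₂,x₃`). -/
def H3 : Set (Fin 3 → ℝ) := {x | 0 < x 1}

/-- The open half-plane `{x₂ > 0}` of `ℝ²`. -/
def H2 : Set (Fin 2 → ℝ) := {x | 0 < x 1}

/-- `w(x) = x₁ sin α - x₂ cos α` on `ℝ³`. -/
def w3 (α : ℝ) (x : Fin 3 → ℝ) : ℝ := x 0 * Real.sin α - x 1 * Real.cos α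

/-- `w(x) = x₁ sin α - x₂ cos α` on `ℝ²`. -/
def w2 (α : ℝ) (x : Fin 2 → ℝ) : ℝ := x 0 * Real.sin α - x 1 * Real.cos α

/-- The step function: `1` where `w > 0`, `a` where `w < 0`. -/
def step2 (α a : ℝ) (x : Fin 2 → ℝ) : ℝ := if 0 < w2 α x then 1 else a

/-- Bottom of the spectrum (infimum of the Rayleigh quotient over nonzero smooth compactly
supported functions) of the magnetic operator `-(∇ - iA)²` on `S ⊆ ℝ³`. -/
def groundEnergy3 (A : (Fin 3 → ℝ) → Fin 3 → ℝ) (S : Set (Fin 3 → ℝ)) : ℝ :=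
  sInf { r : ℝ | ∃ u : (Fin 3 → ℝ) → ℂ, ContDiff ℝ (⊤ : ℕ∞) u ∧ HasCompactSupport u ∧
    (0 < ∫ x in S, ‖u x‖ ^ 2) ∧
    r = (∫ x in S, ∑ j : Fin 3,
          ‖fderiv ℝ u x (e3 j) - Complex.I * (A x j : ℂ) * u x‖ ^ 2) /
        ∫ x in S, ‖u x‖ ^ 2 }

/-- Bottom of the spectrum of `-(∇ - iA)² + V` on `S ⊆ ℝ²`. -/
def groundEnergy2 (A : (Fin 2 → ℝ) → Fin 2 → ℝ) (V : (Fin 2 → ℝ) → ℝ)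
    (S : Set (Fin 2 → ℝ)) : ℝ :=
  sInf { r : ℝ | ∃ u : (Fin 2 → ℝ) → ℂ, ContDiff ℝ (⊤ : ℕ∞) u ∧ HasCompactSupport u ∧
    (0 < ∫ x in S, ‖u x‖ ^ 2) ∧
    r = (∫ x in S, ((∑ j : Fin 2,
          ‖fderiv ℝ u x (e2 j) - Complex.I * (A x j : ℂ) * u x‖ ^ 2)
          + V x * ‖u x‖ ^ 2)) /
        ∫ x in S, ‖u x‖ ^ 2 }

/-- The discontinuous vector potential `A_{α,γ,a}` on the half-space. -/
def Apot3 (α γ a : ℝ) (x : Fin 3 → ℝ) : Fin 3 → ℝ :=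
  ![0,
    if 0 < w3 α x then
      x 0 * Real.cos γ - (1 - a) * (Real.cos α / Real.sin α) * x 1 * Real.cos γ
    else a * (x 0 * Real.cos γ),
    if 0 < w3 α x then (x 1 * Real.cos α - x 0 * Real.sin α) * Real.sin γ
    else a * ((x 1 * Real.cos α - x 0 * Real.sin α) * Real.sin γ)]

/-- `λ_{α,γ,a}`: bottom of the spectrum of the magnetic Neumann Laplacian on the half-space
with the discontinuous field. -/
def lambda3D (α γ a : ℝ) : ℝ := groundEnergy3 (Apot3 α γ a) H3

/-- `A_ν(x) = (0, x₁ cos ν, -x₁ sin ν)`, with `curl A_ν = (0, sin ν, cos ν)`. -/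
def Anu (ν : ℝ) (x : Fin 3 → ℝ) : Fin 3 → ℝ := ![0, x 0 * Real.cos ν, -(x 0 * Real.sin ν)]

/-- `ζ_ν`: bottom of the spectrum of the Neumann realization on the half-space with a constant
unit field making angle `ν` with the boundary. -/
def zeta (ν : ℝ) : ℝ := groundEnergy3 (Anu ν) H3

/-- `μ_a(ξ)`: bottom of the spectrum of the 1D fiber operator with step `σ_a`. -/
def mu (a ξ : ℝ) : ℝ :=
  sInf { r : ℝ | ∃ u : ℝ → ℂ, ContDiff ℝ (⊤ : ℕ∞) u ∧ HasCompactSupport u ∧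
    (0 < ∫ t : ℝ, ‖u t‖ ^ 2) ∧
    r = (∫ t : ℝ, (‖deriv u t‖ ^ 2 +
          ((if 0 < t then 1 else a) * t - ξ) ^ 2 * ‖u t‖ ^ 2)) /
        ∫ t : ℝ, ‖u t‖ ^ 2 }

/-- `β_a = inf_ξ μ_a(ξ)`. -/
def beta (a : ℝ) : ℝ := ⨅ ξ : ℝ, mu a ξ

/-- The projected vector potential `A̲_{α,γ,a}` on the half-plane. -/
def Aund (α γ a : ℝ) (x : Fin 2 → ℝ) : Fin 2 → ℝ :=
  ![0,
    if 0 < w2 α x then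
      x 0 * Real.cos γ - (1 - a) * (Real.cos α / Real.sin α) * x 1 * Real.cos γ
    else a * (x 0 * Real.cos γ)]

/-- The electric potential `V_{α,γ,a,τ}(x) = (s̲(x) w(x) sin γ - τ)²`. -/
def Vpot (α γ a τ : ℝ) (x : Fin 2 → ℝ) : ℝ :=
  (step2 α a x * w2 α x * Real.sin γ - τ) ^ 2

/-- `σ(α,γ,a,τ)`: bottom of the spectrum of the reduced 2D fiber operator. -/
def sigma2D (α γ a τ : ℝ) : ℝ := groundEnergy2 (Aund α γ a) (Vpot α γ a τ) H2

/-- `Σ(α,γ,a,τ,R)`: Rayleigh quotient infimum over nonzero smooth compactly supported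
functions vanishing on the closed ball of radius `R` centered at the origin. -/
def SigmaR (α γ a τ R : ℝ) : ℝ :=
  sInf { r : ℝ | ∃ u : (Fin 2 → ℝ) → ℂ, ContDiff ℝ (⊤ : ℕ∞) u ∧ HasCompactSupport u ∧
    (∀ x ∈ Metric.closedBall (0 : Fin 2 → ℝ) R, u x = 0) ∧
    (0 < ∫ x in H2, ‖u x‖ ^ 2) ∧
    r = (∫ x in H2, ((∑ j : Fin 2,
          ‖fderiv ℝ u x (e2 j) - Complex.I * (Aund α γ a x j : ℂ) * u x‖ ^ 2)
          + Vpot α γ a τ x * ‖u x‖ ^ 2)) /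
        ∫ x in H2, ‖u x‖ ^ 2 }

/-- `σ_ess(α,γ,a,τ)`: the Persson (essential spectrum) threshold. -/
def sigmaEss (α γ a τ : ℝ) : ℝ := sSup ((fun R => SigmaR α γ a τ R) '' Ioi (0 : ℝ))

/-- The explicit constant `A[α,γ,a]`. -/
def Aconst (α γ a : ℝ) : ℝ :=
  (1 / 128) * (-1 + Real.cosh π / Real.sinh π) *
    (π * Real.cos γ ^ 2 *
        (4 * (a - 1) * ((a - Real.exp π) * Real.exp (π - α) + (a * Real.exp π - 1) * Real.exp α)
          - (a - 1) ^ 2 * (Real.exp (2 * π - 2 * α) + Real.exp (2 * α))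
          - 2 * Real.exp π * (-4 * a + (3 - 2 * a + 3 * a ^ 2) * Real.cosh π))
      + 4 * (Real.exp (2 * π) - 1) *
          (-(a ^ 2 * (π - α) + α) * (-3 + Real.cos (2 * γ))
            + 2 * (a ^ 2 - 1) * Real.sin γ ^ 2 * Real.sin (2 * α)))

/-- The explicit lower bound of the de Gennes constant. -/
def ThetaLow : ℝ := 0.590106125 - 1e-9

/-- `x̄ = π |a| Θ₀^low / (4 A[α,γ,a])`. -/
def xbar (α γ a : ℝ) : ℝ := π * |a| * ThetaLow / (4 * Aconst α γ a)

/-- The quadratic `x ↦ A[α,γ,a] x² - (π/2) |a| Θ₀^low x + π/2`. -/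
def Pq (α γ a x : ℝ) : ℝ := Aconst α γ a * x ^ 2 - (π / 2) * |a| * ThetaLow * x + π / 2

/-!
Writing the exponentials through hyperbolic functions, `A[α,γ,a]` is the convex combination,
with weights `cos²γ` and `sin²γ`, of `(π Q / sinh π + 8 T) / 64` and
`(2 a² π + (1 - a²)(2α - sin 2α)) / 8`, where `Q = coshPoly α a` and `T = α + a² (π - α)`.
The second term is positive since `sin 2α < 2α`. For the first, `sinh (π - α) · (Q + 2 T sinh π)`
is a quadratic form in `k = (1 - a) cosh (π - α) + a`, plus
`2 a² sinh π ((π - α) sinh (π - α) - 2 (cosh (π - α) - 1))`; both are nonnegative because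
`tanh x ≤ x` for `x ≥ 0` (the quadratic form through its discriminant), and `π < 4` supplies the
strict margin. Once `A > 0`, the quadratic `Pq` exceeds its value at `x̄` by exactly `A (x - x̄)²`.
-/

theorem sinh_le_mul_cosh {x : ℝ} (hx : 0 ≤ x) : sinh x ≤ x * cosh x := by
  have hderiv (t : ℝ) : HasDerivAt (fun t => t * cosh t - sinh t) (t * sinh t) t :=
    (((hasDerivAt_id' t).mul (hasDerivAt_cosh t)).sub (hasDerivAt_sinh t)).congr_deriv (by ring)
  have hmono : MonotoneOn (fun t => t * cosh t - sinh t) (Ici 0) := by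
    refine monotoneOn_of_deriv_nonneg (convex_Ici 0) (by fun_prop) (by fun_prop) fun t ht => ?_
    rw [interior_Ici] at ht
    rw [(hderiv t).deriv]
    exact mul_nonneg ht.le (sinh_nonneg_iff.2 ht.le)
  simpa using hmono self_mem_Ici hx hx

theorem two_mul_cosh_sub_one_le {x : ℝ} (hx : 0 ≤ x) : 2 * (cosh x - 1) ≤ x * sinh x := by
  obtain ⟨y, rfl⟩ : ∃ y, x = 2 * y := ⟨x / 2, by ring⟩
  have hy : 0 ≤ y := by linarith
  have hs : 0 ≤ sinh y := sinh_nonneg_iff.2 hy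
  rw [cosh_two_mul, sinh_two_mul]
  nlinarith [mul_le_mul_of_nonneg_left (sinh_le_mul_cosh hy) hs, cosh_sq y]

theorem sinh_sub_sinh_sq_sub_sinh_sq (α L : ℝ) :
    (sinh L - sinh (L - α)) ^ 2 - sinh α ^ 2 = 4 * sinh (α / 2) ^ 2 * sinh L * sinh (L - α) := by
  obtain ⟨h, rfl⟩ : ∃ h, α = 2 * h := ⟨α / 2, by ring⟩
  rw [mul_div_cancel_left₀ h two_ne_zero]
  simp only [sinh_eq, exp_sub, exp_neg, two_mul, exp_add]
  field_simp
  ring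

theorem sq_sinh_sub_sinh_sub_le {α L : ℝ} (hα : 0 ≤ α) (hαL : α ≤ L) :
    (sinh L - sinh (L - α)) ^ 2 ≤ sinh α ^ 2 + α * sinh α * sinh L * sinh (L - α) := by
  obtain ⟨h, rfl⟩ : ∃ h, α = 2 * h := ⟨α / 2, by ring⟩
  have hh : 0 ≤ h := by linarith
  have hsh : 0 ≤ sinh h := sinh_nonneg_iff.2 hh
  have hprod : 0 ≤ sinh L * sinh (L - 2 * h) :=
    mul_nonneg (sinh_nonneg_iff.2 (by linarith)) (sinh_nonneg_iff.2 (by linarith))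
  have key := sinh_sub_sinh_sq_sub_sinh_sq (2 * h) L
  rw [mul_div_cancel_left₀ h two_ne_zero, sinh_two_mul] at key
  rw [sinh_two_mul]
  nlinarith [mul_nonneg (mul_nonneg hprod hsh) (sub_nonneg.2 (sinh_le_mul_cosh hh))]

theorem sinh_quadratic_form_nonneg {α L : ℝ} (hα : 0 ≤ α) (hαL : α ≤ L) (k : ℝ) :
    0 ≤ α * sinh L * sinh (L - α) + (1 + k ^ 2) * sinh α - 2 * k * (sinh L - sinh (L - α)) := by
  rcases hα.eq_or_lt with rfl | hα0
  · simp
  have hs : 0 < sinh α := sinh_pos_iff.2 hα0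
  refine nonneg_of_mul_nonneg_right ?_ hs
  nlinarith [sq_nonneg (sinh α * k - (sinh L - sinh (L - α))), sq_sinh_sub_sinh_sub_le hα hαL]

def coshPoly (α a : ℝ) : ℝ :=
  4 * (a - 1) * (a * cosh α - cosh (π - α)) - (a - 1) ^ 2 * cosh (π - 2 * α) + 4 * a
    - (3 - 2 * a + 3 * a ^ 2) * cosh π

theorem sinh_mul_coshPoly_add (α a : ℝ) :
    sinh (π - α) * (coshPoly α a + 2 * sinh π * (α + a ^ 2 * (π - α))) =
      2 * (α * sinh π * sinh (π - α) + (1 + ((1 - a) * cosh (π - α) + a) ^ 2) * sinh α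
          - 2 * ((1 - a) * cosh (π - α) + a) * (sinh π - sinh (π - α)))
        + 2 * a ^ 2 * sinh π * ((π - α) * sinh (π - α) - 2 * (cosh (π - α) - 1)) := by
  simp only [coshPoly, cosh_eq, sinh_eq, exp_sub, exp_neg, two_mul, exp_add]
  field_simp
  ring

theorem Aconst_eq (α γ a : ℝ) :
    Aconst α γ a =
      (cos γ ^ 2 * (π * coshPoly α a / sinh π + 8 * (α + a ^ 2 * (π - α)))
        + 8 * sin γ ^ 2 * (2 * a ^ 2 * π + (1 - a ^ 2) * (2 * α - sin (2 * α)))) / 64 := by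
  have : exp π ^ 2 - 1 ≠ 0 := by nlinarith [one_lt_exp_iff.2 pi_pos]
  rw [Aconst, cos_two_mul', cos_sq']
  simp only [coshPoly, cosh_eq, sinh_eq, exp_sub, exp_neg, two_mul, exp_add]
  field_simp
  ring

theorem coshPoly_add_nonneg {α : ℝ} (hα0 : 0 ≤ α) (hαπ : α < π) (a : ℝ) :
    0 ≤ coshPoly α a + 2 * sinh π * (α + a ^ 2 * (π - α)) := by
  refine nonneg_of_mul_nonneg_right ?_ (sinh_pos_iff.2 (sub_pos.2 hαπ))
  rw [sinh_mul_coshPoly_add]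
  exact add_nonneg
    (mul_nonneg two_pos.le (sinh_quadratic_form_nonneg hα0 hαπ.le _))
    (mul_nonneg (by positivity) (sub_nonneg.2 (two_mul_cosh_sub_one_le (sub_nonneg.2 hαπ.le))))

theorem one_sub_mul_add_mul_pos {t x y : ℝ} (ht0 : 0 ≤ t) (ht1 : t ≤ 1) (hx : 0 < x)
    (hy : 0 < y) : 0 < (1 - t) * x + t * y := by
  simpa using convex_Ioi (0 : ℝ) hx hy (sub_nonneg.2 ht1) ht0 (by ring)

theorem Aconst_pos {α a : ℝ} (hα0 : 0 < α) (hαπ : α < π) (ha : a ^ 2 ≤ 1) (γ : ℝ) :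
    0 < Aconst α γ a := by
  have hsπ : 0 < sinh π := sinh_pos_iff.2 pi_pos
  have hT : 0 < α + a ^ 2 * (π - α) := by nlinarith
  have hcosh : 0 < π * coshPoly α a / sinh π + 8 * (α + a ^ 2 * (π - α)) := by
    have := coshPoly_add_nonneg hα0.le hαπ a
    have : π * coshPoly α a / sinh π + 8 * (α + a ^ 2 * (π - α)) =
        π * (coshPoly α a + 2 * sinh π * (α + a ^ 2 * (π - α))) / sinh π
          + (8 - 2 * π) * (α + a ^ 2 * (π - α)) := by
      field_simp
      ring
    rw [this]
    have : 0 < 8 - 2 * π := by linarith [pi_lt_four]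
    positivity
  have hsin : 0 < 2 * a ^ 2 * π + (1 - a ^ 2) * (2 * α - sin (2 * α)) := by
    have hsin_lt : sin (2 * α) < 2 * α := sin_lt (by positivity)
    have := one_sub_mul_add_mul_pos (sq_nonneg a) ha (sub_pos.2 hsin_lt) (by positivity : 0 < 2 * π)
    linarith
  rw [Aconst_eq, cos_sq']
  have := one_sub_mul_add_mul_pos (sq_nonneg (sin γ)) (sin_sq_le_one γ) hcosh
    (by positivity : 0 < 8 * (2 * a ^ 2 * π + (1 - a ^ 2) * (2 * α - sin (2 * α))))
  linarith

theorem Pq_sub_Pq_xbar {α γ a : ℝ} (h : Aconst α γ a ≠ 0) (x : ℝ) :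
    Pq α γ a x - Pq α γ a (xbar α γ a) = Aconst α γ a * (x - xbar α γ a) ^ 2 := by
  simp only [Pq, xbar]
  field_simp
  ring

theorem Aconst_pos_and_min_general (a α γ : ℝ) (ha : a ∈ Ico (-1 : ℝ) 1) (ha0 : a ≠ 0)
    (hα : α ∈ Ioo 0 π) :
    0 < Aconst α γ a ∧ 0 < xbar α γ a ∧
    (∀ x ∈ Ioi (0 : ℝ), Pq α γ a (xbar α γ a) ≤ Pq α γ a x) ∧
    (∀ x ∈ Ioi (0 : ℝ), (∀ y ∈ Ioi (0 : ℝ), Pq α γ a x ≤ Pq α γ a y) → x = xbar α γ a) := by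
  have hA : 0 < Aconst α γ a := Aconst_pos hα.1 hα.2 (by nlinarith [ha.1, ha.2]) γ
  have hxbar : 0 < xbar α γ a := by
    have : 0 < |a| := abs_pos.2 ha0
    unfold xbar ThetaLow
    positivity
  have hsq := Pq_sub_Pq_xbar hA.ne'
  refine ⟨hA, hxbar, fun x _ => ?_, fun x _ hmin => ?_⟩
  · rw [← sub_nonneg, hsq]
    positivity
  · have : Aconst α γ a * (x - xbar α γ a) ^ 2 ≤ 0 := by
      linarith [hsq x, hmin _ hxbar]
    have := le_antisymm (nonpos_of_mul_nonpos_right this hA) (sq_nonneg _)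
    exact sub_eq_zero.1 (pow_eq_zero_iff two_ne_zero |>.1 this)

/-- **Remark 1.4.** `A[α,γ,a] > 0`, and the quadratic attains its minimum over `(0,∞)` at the
unique point `x̄ = π |a| Θ₀^low / (4 A[α,γ,a]) > 0`. -/
theorem Aconst_pos_and_min (a α γ : ℝ) (ha : a ∈ Ico (-1 : ℝ) 1) (ha0 : a ≠ 0)
    (hα : α ∈ Ioo 0 π) (hγ : γ ∈ Icc 0 (π / 2)) :
    0 < Aconst α γ a ∧ 0 < xbar α γ a ∧
    (∀ x ∈ Ioi (0 : ℝ), Pq α γ a (xbar α γ a) ≤ Pq α γ a x) ∧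
    (∀ x ∈ Ioi (0 : ℝ), (∀ y ∈ Ioi (0 : ℝ), Pq α γ a x ≤ Pq α γ a y) → x = xbar α γ a) :=
  Aconst_pos_and_min_general a α γ ha ha0 hα

end MagStep
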